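/- Let n be an integer. If n is expressible as a²+b²+c²+d² for integers a,b,c,d with ad−bc=1, then both n+2 and n−2 are sums of two integer squares. Conversely, if both n+2 and n−2 are sums of two integer squares, then there exist integers a,b,c,d with ad−bc=1 and a²+b²+c²+d² = n. -/
import Mathlib

lemma sq_mod_four (x : ℤ) : (x % 2 = 0 ∧ x ^ 2 % 4 = 0) ∨ (x % 2 = 1 ∧ x ^ 2 % 4 = 1) := by
  obtain ⟨k, hk | hk⟩ : ∃ k, x = 2 * k ∨ x = 2 * k + 1 := ⟨x / 2, by omega⟩ <;> subst hk
  · left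
    constructor
    · omega
    · have : (2 * k) ^ 2 = 4 * k ^ 2 := by ring
      omega
  · right
    constructor
    · omega
    · have : (2 * k + 1) ^ 2 = 4 * (k ^ 2 + k) + 1 := by ring
      omega

lemma main_construct (n P Q R S : ℤ) (hPQ : P ^ 2 + Q ^ 2 = n + 2)
    (hRS : R ^ 2 + S ^ 2 = n - 2) (h1 : (P - R) % 2 = 0) (h2 : (Q - S) % 2 = 0) :
    ∃ a b c d : ℤ, a * d - b * c = 1 ∧ a ^ 2 + b ^ 2 + c ^ 2 + d ^ 2 = n := by
  obtain ⟨u, hu⟩ : ∃ u, P = R + 2 * u := ⟨(P - R) / 2, by omega⟩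
  obtain ⟨v, hv⟩ : ∃ v, Q = S + 2 * v := ⟨(Q - S) / 2, by omega⟩
  subst hu hv
  have key : R * u + u ^ 2 + S * v + v ^ 2 = 1 := by nlinarith [hPQ, hRS]
  exact ⟨R + u, S + v, -v, u, by linarith [key], by nlinarith [key, hRS]⟩

/-- An integer `n` is of the form `a²+b²+c²+d²` with `ad−bc = 1` iff both
`n+2` and `n−2` are sums of two integer squares (stated as two implications). -/
theorem N_eq_sums_of_two_squares (n : ℤ) :
    ((∃ a b c d : ℤ, a * d - b * c = 1 ∧ a ^ 2 + b ^ 2 + c ^ 2 + d ^ 2 = n) →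
      (∃ x y : ℤ, x ^ 2 + y ^ 2 = n + 2) ∧ (∃ x y : ℤ, x ^ 2 + y ^ 2 = n - 2)) ∧
    (((∃ x y : ℤ, x ^ 2 + y ^ 2 = n + 2) ∧ (∃ x y : ℤ, x ^ 2 + y ^ 2 = n - 2)) →
      ∃ a b c d : ℤ, a * d - b * c = 1 ∧ a ^ 2 + b ^ 2 + c ^ 2 + d ^ 2 = n) := by
  constructor
  · rintro ⟨a, b, c, d, h1, h2⟩
    exact ⟨⟨a + d, b - c, by linear_combination h2 + 2 * h1⟩,
           ⟨a - d, b + c, by linear_combination h2 - 2 * h1⟩⟩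
  · rintro ⟨⟨p, q, hpq⟩, ⟨r, s, hrs⟩⟩
    have hp := sq_mod_four p
    have hq := sq_mod_four q
    have hr := sq_mod_four r
    have hs := sq_mod_four s
    have h4 : p ^ 2 + q ^ 2 = r ^ 2 + s ^ 2 + 4 := by omega
    have hcases : ((p - r) % 2 = 0 ∧ (q - s) % 2 = 0) ∨
        ((p - s) % 2 = 0 ∧ (q - r) % 2 = 0) := by omega
    rcases hcases with ⟨h1, h2⟩ | ⟨h1, h2⟩
    · exact main_construct n p q r s hpq hrs h1 h2
    · exact main_construct n p q s r hpq (by linarith) h1 h2
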